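/- Non-measurability of the generalized Vitali set: for rational q with 1/2 < q ≤ 1 (taking μ_1 to be Lebesgue measure when q = 1), any transversal V_q ⊆ [0,1] of the equivalence relation ∼_q is not μ_q-measurable. Specifically, if V_q were measurable, then μ_q([0,1]) ≤ Σ_{k=1}^∞ μ_q(V_q) ≤ μ_q([-2,3]) with μ_q([0,1]) = (1/(1-q))ln(2-q) > 0 and μ_q([-2,3]) = (1/(1-q))ln((4-3q)/(2q-1)) < ∞, a contradiction. -/

import Mathlib

open MeasureTheory

def qAdd (q x y : ℝ) : ℝ := x + y + (1 - q) * x * y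

def qSim (q x y : ℝ) : Prop := ∃ r : ℚ, x = qAdd q y (r : ℝ)

/-- `V` is a transversal of `∼_q` on `[0,1]`. -/
def IsQTransversal (q : ℝ) (V : Set ℝ) : Prop :=
  V ⊆ Set.Icc 0 1 ∧ ∀ x ∈ Set.Icc (0:ℝ) 1, ∃! v, v ∈ V ∧ qSim q x v

/-- The measure with density `1/(1+(1-q)x)` with respect to Lebesgue measure.
For `q = 1` the density is identically `1`, so `qMeasure 1` is Lebesgue measure. -/
noncomputable def qMeasure (q : ℝ) : Measure ℝ :=
  volume.withDensity (fun x => ENNReal.ofReal (1 / (1 + (1 - q) * x)))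

/-!
`x ↦ x ⊕_q y` is affine with slope `1 + (1 - q) y`, and
`1 + (1 - q) (x ⊕_q y) = (1 + (1 - q) x) (1 + (1 - q) y)`, so by the change of variables
formula it preserves `μ_q` whenever `1 + (1 - q) y > 0`. If `V` were measurable, the copies
`V ⊕_q r`, `r ∈ ℚ ∩ [-1, 1]`, would be countably many pairwise disjoint sets of equal measure,
so their union would have measure `0` or `∞`. But it contains `[0, 1]`, of positive measure,
and lies in `[-2, 3]`, of finite measure because the density `1 / (1 + (1 - q) x)` stays
bounded there for `q > 1/2`.
-/

open Set Function

lemma MeasureTheory.measure_iUnion_eq_zero_or_eq_top {α ι : Type*} [MeasurableSpace α]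
    [Countable ι] [Infinite ι] {μ : Measure α} {s : ι → Set α} {m : ENNReal}
    (hd : Pairwise (AEDisjoint μ on s)) (hs : ∀ i, NullMeasurableSet (s i) μ)
    (hm : ∀ i, μ (s i) = m) : μ (⋃ i, s i) = 0 ∨ μ (⋃ i, s i) = ⊤ := by
  rw [measure_iUnion₀ hd hs, tsum_congr hm]
  rcases eq_or_ne m 0 with rfl | h
  · simp
  · exact Or.inr (ENNReal.tsum_const_eq_top_of_ne_zero h)

section qAdd

variable {q x y : ℝ}

lemma qAdd_comm (q x y : ℝ) : qAdd q x y = qAdd q y x := by unfold qAdd; ring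

lemma qAdd_assoc (q x y z : ℝ) : qAdd q (qAdd q x y) z = qAdd q x (qAdd q y z) := by
  unfold qAdd; ring

@[simp] lemma qAdd_zero (q x : ℝ) : qAdd q x 0 = x := by simp [qAdd]

lemma qAdd_eq_add_mul (q x y : ℝ) : qAdd q x y = x + y * (1 + (1 - q) * x) := by
  unfold qAdd; ring

lemma one_add_mul_qAdd (q x y : ℝ) :
    1 + (1 - q) * qAdd q x y = (1 + (1 - q) * x) * (1 + (1 - q) * y) := by
  unfold qAdd; ring

lemma hasDerivAt_qAdd_const (q x y : ℝ) :
    HasDerivAt (qAdd q · y) (1 + (1 - q) * y) x := by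
  have h : (qAdd q · y) = fun x => (1 + (1 - q) * y) * x + y := funext fun x => by
    unfold qAdd; ring
  simpa [h] using ((hasDerivAt_id x).const_mul (1 + (1 - q) * y)).add_const y

lemma measurable_qAdd_const (q y : ℝ) : Measurable (qAdd q · y) := by
  unfold qAdd; fun_prop

noncomputable def qNeg (q x : ℝ) : ℝ := -x / (1 + (1 - q) * x)

lemma qAdd_qNeg (h : 1 + (1 - q) * x ≠ 0) : qAdd q x (qNeg q x) = 0 := by
  rw [qAdd_eq_add_mul, qNeg, div_mul_cancel₀ _ h, add_neg_cancel]

lemma one_add_mul_qNeg (h : 1 + (1 - q) * x ≠ 0) :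
    1 + (1 - q) * qNeg q x = (1 + (1 - q) * x)⁻¹ := by
  unfold qNeg; field_simp; ring

lemma one_add_mul_qNeg_pos (h : 0 < 1 + (1 - q) * x) : 0 < 1 + (1 - q) * qNeg q x := by
  rw [one_add_mul_qNeg h.ne']; positivity

lemma leftInverse_qAdd_qNeg (h : 1 + (1 - q) * y ≠ 0) :
    LeftInverse (qAdd q · (qNeg q y)) (qAdd q · y) := fun x => by
  dsimp only
  rw [qAdd_assoc, qAdd_qNeg h, qAdd_zero]

lemma rightInverse_qAdd_qNeg (h : 1 + (1 - q) * y ≠ 0) :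
    RightInverse (qAdd q · (qNeg q y)) (qAdd q · y) := fun x => by
  dsimp only
  rw [qAdd_assoc, qAdd_comm q (qNeg q y), qAdd_qNeg h, qAdd_zero]

lemma image_qAdd_eq_preimage (h : 1 + (1 - q) * y ≠ 0) (s : Set ℝ) :
    (qAdd q · y) '' s = (qAdd q · (qNeg q y)) ⁻¹' s :=
  congrFun (image_eq_preimage_of_inverse (leftInverse_qAdd_qNeg h) (rightInverse_qAdd_qNeg h)) s

end qAdd

section qMeasure

variable {q y : ℝ} {s : Set ℝ}

lemma qMeasure_apply (q : ℝ) (hs : MeasurableSet s) :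
    qMeasure q s = ∫⁻ x in s, ENNReal.ofReal (1 / (1 + (1 - q) * x)) :=
  withDensity_apply _ hs

lemma qMeasure_image_qAdd_of_measurableSet (hy : 0 < 1 + (1 - q) * y) (hs : MeasurableSet s) :
    qMeasure q ((qAdd q · y) '' s) = qMeasure q s := by
  have hs' : MeasurableSet ((qAdd q · y) '' s) := by
    rw [image_qAdd_eq_preimage hy.ne']; exact measurable_qAdd_const q _ hs
  rw [qMeasure_apply q hs', lintegral_image_eq_lintegral_abs_deriv_mul hs
      (fun x _ => (hasDerivAt_qAdd_const q x y).hasDerivWithinAt)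
      (leftInverse_qAdd_qNeg hy.ne').injective.injOn, qMeasure_apply q hs]
  refine setLIntegral_congr_fun hs fun x _ => ?_
  rw [one_add_mul_qAdd, abs_of_pos hy, ← ENNReal.ofReal_mul hy.le]
  congr 1
  field_simp

lemma measurePreserving_qAdd_const (hy : 0 < 1 + (1 - q) * y) :
    MeasurePreserving (qAdd q · y) (qMeasure q) (qMeasure q) := by
  refine ⟨measurable_qAdd_const q y, Measure.ext fun s hs => ?_⟩
  rw [Measure.map_apply (measurable_qAdd_const q y) hs,
    ← image_eq_preimage_of_inverse (rightInverse_qAdd_qNeg hy.ne') (leftInverse_qAdd_qNeg hy.ne'),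
    qMeasure_image_qAdd_of_measurableSet (one_add_mul_qNeg_pos hy) hs]

lemma nullMeasurableSet_image_qAdd (hy : 0 < 1 + (1 - q) * y)
    (hs : NullMeasurableSet s (qMeasure q)) :
    NullMeasurableSet ((qAdd q · y) '' s) (qMeasure q) := by
  rw [image_qAdd_eq_preimage hy.ne']
  exact hs.preimage (measurePreserving_qAdd_const (one_add_mul_qNeg_pos hy)).quasiMeasurePreserving

lemma qMeasure_image_qAdd (hy : 0 < 1 + (1 - q) * y) (hs : NullMeasurableSet s (qMeasure q)) :
    qMeasure q ((qAdd q · y) '' s) = qMeasure q s := by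
  rw [image_qAdd_eq_preimage hy.ne']
  exact (measurePreserving_qAdd_const (one_add_mul_qNeg_pos hy)).measure_preimage hs

lemma qMeasure_eq_zero_iff (hs : ∀ x ∈ s, 0 < 1 + (1 - q) * x) :
    qMeasure q s = 0 ↔ volume s = 0 := by
  have hdens : {x : ℝ | ENNReal.ofReal (1 / (1 + (1 - q) * x)) ≠ 0} ∩ s = s :=
    inter_eq_right.2 fun x hx => (ENNReal.ofReal_pos.2 (one_div_pos.2 (hs x hx))).ne'
  rw [qMeasure, withDensity_apply_eq_zero' (by fun_prop), hdens]

lemma qMeasure_Icc_lt_top {a b : ℝ} (h : ∀ x ∈ Icc a b, 1 + (1 - q) * x ≠ 0) :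
    qMeasure q (Icc a b) < ⊤ := by
  rw [qMeasure_apply q measurableSet_Icc]
  exact (ContinuousOn.integrableOn_Icc (continuousOn_const.div (by fun_prop) h)).lintegral_lt_top

end qMeasure

section Bounds

variable {q x y : ℝ}

lemma one_add_mul_pos (hq0 : 0 < q) (hq1 : q ≤ 1) (hy : -1 ≤ y) : 0 < 1 + (1 - q) * y := by
  nlinarith

lemma one_add_mul_pos_of_nonneg (hq : q ≤ 1) (hy : 0 ≤ y) : 0 < 1 + (1 - q) * y := by
  nlinarith

lemma mem_Icc_of_qAdd_mem_Icc (hq : q ≤ 1) (hx : x ∈ Icc 0 1) (hy : qAdd q x y ∈ Icc 0 1) :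
    y ∈ Icc (-1) 1 := by
  rw [qAdd_eq_add_mul] at hy
  obtain ⟨hx0, hx1⟩ := hx
  obtain ⟨hy0, hy1⟩ := hy
  have : 0 ≤ (1 - q) * x := mul_nonneg (by linarith) hx0
  constructor <;> nlinarith

lemma qAdd_mem_Icc (hq0 : 0 ≤ q) (hq1 : q ≤ 1) (hx : x ∈ Icc 0 1) (hy : y ∈ Icc (-1) 1) :
    qAdd q x y ∈ Icc (-2) 3 := by
  obtain ⟨hx0, hx1⟩ := hx
  obtain ⟨hy0, hy1⟩ := hy
  have h1 : 0 ≤ (1 - q) * x := mul_nonneg (by linarith) hx0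
  have h2 : (1 - q) * x ≤ 1 := by nlinarith
  unfold qAdd
  constructor <;> nlinarith

end Bounds

lemma qSim_of_qAdd_eq_qAdd {q r r' : ℚ} {v v' : ℝ} (hr : 1 + (1 - q) * (r : ℝ) ≠ 0)
    (h : qAdd q v' r' = qAdd q v r) : qSim q v v' := by
  refine ⟨(r' - r) / (1 + (1 - q) * r), ?_⟩
  push_cast
  rw [qAdd_eq_add_mul, div_mul_eq_mul_div, ← sub_eq_iff_eq_add', eq_div_iff hr]
  unfold qAdd at h
  linear_combination -h

namespace IsQTransversal

variable {V : Set ℝ}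

lemma Icc_subset_iUnion_image_qAdd {q : ℝ} (hV : IsQTransversal q V) (hq : q ≤ 1) :
    Icc 0 1 ⊆ ⋃ r : Icc (-1 : ℚ) 1, (qAdd q · (r : ℝ)) '' V := by
  intro x hx
  obtain ⟨v, ⟨hv, t, rfl⟩, -⟩ := hV.2 x hx
  have ht := mem_Icc_of_qAdd_mem_Icc hq (hV.1 hv) hx
  exact mem_iUnion.2 ⟨⟨t, by exact_mod_cast ht.1, by exact_mod_cast ht.2⟩, v, hv, rfl⟩

lemma disjoint_image_qAdd {q : ℚ} (hV : IsQTransversal q V) (hq : q ≤ 1) {r r' : ℚ}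
    (hr : 1 + (1 - q) * (r : ℝ) ≠ 0) (hrr' : r ≠ r') :
    Disjoint ((qAdd q · (r : ℝ)) '' V) ((qAdd q · (r' : ℝ)) '' V) := by
  rw [disjoint_left]
  rintro _ ⟨v, hv, rfl⟩ ⟨v', hv', h⟩
  have hvv' : v' = v :=
    (hV.2 v (hV.1 hv)).unique ⟨hv', qSim_of_qAdd_eq_qAdd hr h⟩ ⟨hv, 0, by simp⟩
  subst hvv'
  have hv0 := one_add_mul_pos_of_nonneg (show (q : ℝ) ≤ 1 by exact_mod_cast hq) (hV.1 hv).1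
  simp only [qAdd_eq_add_mul, add_right_inj] at h
  exact hrr' (by exact_mod_cast (mul_right_cancel₀ hv0.ne' h).symm)

end IsQTransversal

/-- Non-measurability of the generalized Vitali set for `1/2 < q ≤ 1`. -/
theorem qVitali_not_measurable (q : ℚ) (hq : 1/2 < q) (hq1 : q ≤ 1)
    (V : Set ℝ) (hV : IsQTransversal (q:ℝ) V) :
    ¬ NullMeasurableSet V (qMeasure (q:ℝ)) := by
  intro hVm
  have hq' : (1 : ℝ) < 2 * q := by exact_mod_cast (by linarith : (1 : ℚ) < 2 * q)
  have hq1' : (q : ℝ) ≤ 1 := by exact_mod_cast hq1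
  have hpos (r : Icc (-1 : ℚ) 1) : 0 < 1 + (1 - (q : ℝ)) * r :=
    one_add_mul_pos (by linarith) hq1' (by exact_mod_cast r.2.1)
  have : Infinite (Icc (-1 : ℚ) 1) := Icc.infinite (by norm_num)
  rcases measure_iUnion_eq_zero_or_eq_top (μ := qMeasure q)
      (fun r r' hrr' =>
        (hV.disjoint_image_qAdd hq1 (hpos r).ne' (Subtype.coe_injective.ne hrr')).aedisjoint)
      (fun r => nullMeasurableSet_image_qAdd (hpos r) hVm)
      (fun r => qMeasure_image_qAdd (hpos r) hVm) with h | h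
  · have h01 := measure_mono_null (hV.Icc_subset_iUnion_image_qAdd hq1') h
    rw [qMeasure_eq_zero_iff fun x hx => one_add_mul_pos_of_nonneg hq1' hx.1] at h01
    simp at h01
  · have hsub : ⋃ r : Icc (-1 : ℚ) 1, (qAdd q · (r : ℝ)) '' V ⊆ Icc (-2) 3 :=
      iUnion_subset fun r => image_subset_iff.2 fun v hv => qAdd_mem_Icc (by linarith) hq1'
        (hV.1 hv) ⟨by exact_mod_cast r.2.1, by exact_mod_cast r.2.2⟩
    have hfin : qMeasure q (Icc (-2) 3) < ⊤ :=
      qMeasure_Icc_lt_top fun x hx => (by nlinarith [hx.1] : 0 < 1 + (1 - (q : ℝ)) * x).ne'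
    exact hfin.ne (top_unique (h ▸ measure_mono hsub))
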